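/- arXiv:2505.19822 — 4 statements merged into one kernel-verified Lean document; each statement's English description precedes it below -/
import Mathlib

section
/- Let ν ∈ (0,1], let k be a nonzero integer, and let η, l be real numbers. If g : [0,∞) → ℂ is differentiable and satisfies g'(t) = (−2k(η − kt)/(k² + (η − kt)² + l²) − ν(k² + (η − kt)² + l²))·g(t) for all t ≥ 0, then |g(t)| ≤ 9·ν^{−2/3}·e^{−νt³/24}·|g(0)| for all t ≥ 0. -/
open Real

private lemma aux_scalar (u : ℝ) (hu : 0 ≤ u) :
    (2 + 2*(12*u)^((2:ℝ)/3)) * Real.exp (-(u/2)) ≤ 9 := by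
  set v : ℝ := (12*u)^((1:ℝ)/3) with hvdef
  have h12u : (0:ℝ) ≤ 12*u := by linarith
  have hv0 : 0 ≤ v := Real.rpow_nonneg h12u _
  have hv3 : v^3 = 12*u := by
    rw [hvdef, ← Real.rpow_natCast ((12*u)^((1:ℝ)/3)) 3, ← Real.rpow_mul h12u]
    norm_num
  have hv2 : (12*u)^((2:ℝ)/3) = v^2 := by
    rw [hvdef, ← Real.rpow_natCast ((12*u)^((1:ℝ)/3)) 2, ← Real.rpow_mul h12u]
    norm_num
  have hexp : (1 + u/4)^2 ≤ Real.exp (u/2) := by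
    have h1 : (0:ℝ) ≤ 1 + u/4 := by linarith
    have h2 := Real.add_one_le_exp (u/4)
    have h3 : Real.exp (u/2) = Real.exp (u/4) * Real.exp (u/4) := by
      rw [← Real.exp_add]; ring_nf
    nlinarith [Real.exp_pos (u/4)]
  have hpoly : 2 + 2*v^2 ≤ 9*(1 + u/4)^2 := by
    have hu12 : u = v^3/12 := by linarith [hv3]
    rw [hu12]
    nlinarith [sq_nonneg (v^2 - 4*v), sq_nonneg (v-2), sq_nonneg v,
      mul_nonneg hv0 (sq_nonneg (v-2)), sq_nonneg (v^3 - 8*v), sq_nonneg (v^3-16),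
      mul_nonneg hv0 (sq_nonneg (v^2-4))]
  rw [hv2, Real.exp_neg, mul_inv_le_iff₀' (Real.exp_pos _)]
  calc 2 + 2*v^2 ≤ 9*(1+u/4)^2 := hpoly
    _ ≤ Real.exp (u/2) * 9 := by nlinarith

set_option maxHeartbeats 1600000 in
theorem stmt_4 (ν : ℝ) (hν : ν ∈ Set.Ioc (0:ℝ) 1) (k : ℤ) (hk : k ≠ 0) (η l : ℝ)
    (g : ℝ → ℂ)
    (hg : ∀ t : ℝ, 0 ≤ t →
      HasDerivAt g
        ((-(2 * (k:ℝ) * (η - k * t) / ((k:ℝ) ^ 2 + (η - k * t) ^ 2 + l ^ 2))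
          - ν * ((k:ℝ) ^ 2 + (η - k * t) ^ 2 + l ^ 2)) * g t) t) :
    ∀ t : ℝ, 0 ≤ t →
      ‖g t‖ ≤ 9 * ν ^ (-(2:ℝ)/3) * Real.exp (-(ν * t ^ 3) / 24) * ‖g 0‖ := by
  obtain ⟨hν0, hν1⟩ := hν
  set c : ℝ := (k:ℝ) with hcdef
  have hc : c ≠ 0 := Int.cast_ne_zero.mpr hk
  have hc2 : (1:ℝ) ≤ c^2 := by
    have : (1:ℤ) ≤ k^2 := by
      rcases lt_or_gt_of_ne hk with h | h
      · nlinarith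
      · nlinarith
    calc (1:ℝ) = ((1:ℤ):ℝ) := by norm_num
      _ ≤ ((k^2:ℤ):ℝ) := by exact_mod_cast this
      _ = c^2 := by push_cast [hcdef]; ring
  set m : ℝ → ℝ := fun s => c^2 + (η - c*s)^2 + l^2 with hmdef
  have hmpos : ∀ s, 0 < m s := by
    intro s
    have : 0 < c^2 := by positivity
    simp only [hmdef]; nlinarith [sq_nonneg (η - c*s), sq_nonneg l]
  set F : ℝ → ℝ := fun s => Real.log (m s) - ν * ((c^2+l^2)*s + (η^3 - (η-c*s)^3)/(3*c)) with hFdef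
  have hF : ∀ s : ℝ, HasDerivAt F
      (-(2*c*(η - c*s)/(m s)) - ν * m s) s := by
    intro s
    have h1 : HasDerivAt (fun s : ℝ => η - c*s) (-c) s := by
      exact ((hasDerivAt_const s η).sub ((hasDerivAt_id s).const_mul c)).congr_deriv (by ring)
    have h2 : HasDerivAt m (2*(η-c*s)*(-c)) s := by
      have := ((h1.pow 2).const_add (c^2)).add_const (l^2)
      simpa [hmdef, mul_comm, mul_assoc] using this
    have h3 : HasDerivAt (fun s => Real.log (m s)) (2*(η-c*s)*(-c) / m s) s :=
      h2.log (ne_of_gt (hmpos s))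
    have h4 : HasDerivAt (fun s : ℝ => (c^2+l^2)*s + (η^3 - (η-c*s)^3)/(3*c))
        ((c^2+l^2) + (0 - 3*(η-c*s)^2*(-c))/(3*c)) s := by
      have h5 : HasDerivAt (fun s : ℝ => (η^3 - (η-c*s)^3)/(3*c))
          ((0 - 3*(η-c*s)^2*(-c))/(3*c)) s := by
        have := ((hasDerivAt_const s (η^3)).sub (h1.pow 3)).div_const (3*c)
        simpa using this
      exact (((hasDerivAt_id s).const_mul ((c^2+l^2))).add h5).congr_deriv (by ring)
    have := h3.sub (h4.const_mul ν)
    refine this.congr_deriv (Eq.symm ?_)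
    have hms := ne_of_gt (hmpos s)
    simp only [hmdef] at hms ⊢
    field_simp
    ring
  -- the explicit solution formula
  have hg' : ∀ x : ℝ, 0 ≤ x →
      HasDerivAt g ((((-(2*c*(η - c*x)/(m x)) - ν * m x) : ℝ) : ℂ) * g x) x := by
    intro x hx
    have := hg x hx
    convert this using 2
    simp only [hmdef, hcdef]
    push_cast
    ring
  have key : ∀ t : ℝ, 0 ≤ t → g t = g 0 * Complex.exp (((F t - F 0 : ℝ) : ℂ)) := by
    intro t ht
    set f : ℝ → ℂ := fun s => g s * Complex.exp (-((F s : ℝ) : ℂ)) with hfdef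
    have hfd : ∀ x : ℝ, 0 ≤ x → HasDerivAt f 0 x := by
      intro x hx
      have hFx : HasDerivAt (fun s : ℝ => ((F s : ℝ) : ℂ))
          (((-(2*c*(η - c*x)/(m x)) - ν * m x : ℝ) : ℂ)) x := (hF x).ofReal_comp
      have hE := (hFx.neg).cexp
      have := (hg' x hx).mul hE
      refine this.congr_deriv (Eq.symm ?_)
      ring
    have hcont : ContinuousOn f (Set.Icc 0 t) := by
      intro x hx
      exact (hfd x hx.1).continuousAt.continuousWithinAt
    have hderiv : ∀ x ∈ Set.Ico (0:ℝ) t, HasDerivWithinAt f 0 (Set.Ici x) x := by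
      intro x hx
      exact (hfd x hx.1).hasDerivWithinAt
    have hconst := constant_of_has_deriv_right_zero hcont hderiv t (Set.right_mem_Icc.mpr ht)
    have h2 : g t * Complex.exp (-((F t : ℝ) : ℂ)) = g 0 * Complex.exp (-((F 0 : ℝ) : ℂ)) := hconst
    calc g t = (g t * Complex.exp (-((F t : ℝ) : ℂ))) * Complex.exp (((F t : ℝ) : ℂ)) := by
            rw [mul_assoc, ← Complex.exp_add]; simp
      _ = (g 0 * Complex.exp (-((F 0 : ℝ) : ℂ))) * Complex.exp (((F t : ℝ) : ℂ)) := by rw [h2]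
      _ = g 0 * Complex.exp (((F t - F 0 : ℝ) : ℂ)) := by
            rw [mul_assoc, ← Complex.exp_add]
            push_cast
            ring_nf
  intro t ht
  have hnorm : ‖g t‖ = Real.exp (F t - F 0) * ‖g 0‖ := by
    rw [key t ht, norm_mul, mul_comm]
    congr 1
    rw [Complex.norm_exp_ofReal]
  clear hg hg' hF key
  set I : ℝ := (η^3 - (η-c*t)^3)/(3*c) with hIdef
  set M : ℝ := (c^2+l^2)*t + I with hMdef
  set mt : ℝ := c^2 + (η-c*t)^2 + l^2 with hmtdef
  set m0 : ℝ := c^2 + η^2 + l^2 with hm0def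
  have hmtpos : 0 < mt := hmpos t
  have hm0pos : 0 < m0 := by
    have := hmpos 0
    simpa [hmdef, hm0def] using this
  have hnorm2 : ‖g t‖ = mt / m0 * Real.exp (-(ν*M)) * ‖g 0‖ := by
    have hFt0 : F t - F 0 = (Real.log mt - Real.log m0) + (-(ν*M)) := by
      simp only [hFdef, hmdef, hMdef, hIdef, hmtdef, hm0def]
      ring_nf
    rw [hnorm, hFt0, Real.exp_add, Real.exp_sub, Real.exp_log hmtpos, Real.exp_log hm0pos]
  have hc2pos : (0:ℝ) < c^2 := by positivity
  have hIeq : I = t*(η^2 + η*(η-c*t) + (η-c*t)^2)/3 := by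
    rw [hIdef]; field_simp; ring
  clear_value I M mt m0 c
  clear hnorm hmpos hmdef hFdef hIdef m F
  have hInn : 0 ≤ I := by
    rw [hIeq]
    have h1 : 0 ≤ η^2 + η*(η-c*t) + (η-c*t)^2 := by
      nlinarith [sq_nonneg (η + (η-c*t)), sq_nonneg η, sq_nonneg (η-c*t)]
    positivity
  have hIlb : c^2*t^3/12 ≤ I := by
    rw [hIeq]
    nlinarith [mul_nonneg ht (sq_nonneg (η + (η-c*t)))]
  set Itil : ℝ := I/c^2 with hItdef
  clear_value Itil
  have hItil0 : 0 ≤ Itil := by rw [hItdef]; positivity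
  have hItil_lb : t^3/12 ≤ Itil := by
    rw [hItdef, le_div_iff₀ hc2pos]
    nlinarith
  have hItil_le : Itil ≤ I := by rw [hItdef]; exact div_le_self hInn hc2
  have hMge : I ≤ M := by
    rw [hMdef]
    nlinarith [mul_nonneg (by positivity : (0:ℝ) ≤ c^2+l^2) ht]
  set u : ℝ := ν*Itil with hudef
  clear_value u
  have hu0 : 0 ≤ u := by rw [hudef]; positivity
  have hMsplit : ν*t^3/24 + u/2 ≤ ν*M := by
    rw [hudef]
    have ha1 : ν*Itil ≤ ν*M :=
      mul_le_mul_of_nonneg_left (le_trans hItil_le hMge) hν0.le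
    have ha2 : ν*(t^3/12) ≤ ν*Itil := mul_le_mul_of_nonneg_left hItil_lb hν0.le
    linarith
  set w : ℝ := (12*Itil)^((2:ℝ)/3) with hwdef
  clear_value w
  have hw0 : 0 ≤ w := by rw [hwdef]; exact Real.rpow_nonneg (by linarith) _
  have hpow23 : ∀ x : ℝ, 0 ≤ x → (x^3)^((2:ℝ)/3) = x^2 := by
    intro x hx
    rw [← Real.rpow_natCast x 3, ← Real.rpow_mul hx, ← Real.rpow_natCast x 2]
    norm_num
  have ht2w : t^2 ≤ w := by
    have h1 : t^3 ≤ 12*Itil := by linarith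
    have h2 : (t^3)^((2:ℝ)/3) ≤ w := by
      rw [hwdef]; exact Real.rpow_le_rpow (by positivity) h1 (by norm_num)
    rwa [hpow23 t ht] at h2
  set y : ℝ := η/c with hydef
  clear_value y
  set aa : ℝ := t - η/c with haadef
  clear_value aa
  have hqy : η - c*t = -(c*aa) := by rw [haadef]; field_simp; ring
  have hmt : mt = c^2*(1+aa^2) + l^2 := by
    rw [hmtdef, hqy]; ring
  have hm0 : m0 = c^2*(1+y^2) + l^2 := by
    rw [hm0def, hydef]
    field_simp
  have hItil_eq : Itil = (y^3 + aa^3)/3 := by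
    rw [hItdef, hIeq, hydef, haadef]
    field_simp
    ring
  have claim1 : 1 + aa^2 ≤ (1+y^2)*(2+2*w) := by
    rcases le_or_gt aa 0 with h | h
    · have hty : t ≤ y := by rw [hydef]; rw [haadef] at h; linarith [hydef]
      have hay : aa^2 ≤ y^2 := by
        rw [haadef] at h ⊢
        rw [hydef] at hty
        nlinarith [mul_nonneg ht (by linarith : (0:ℝ) ≤ 2*(η/c) - t)]
      nlinarith [hw0, sq_nonneg y, mul_nonneg (sq_nonneg y) hw0]
    · rcases le_or_gt 0 y with hy | hy
      · have haI : aa^3 ≤ 12*Itil := by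
          rw [hItil_eq]
          nlinarith [pow_nonneg hy 3, pow_pos h 3]
        have ha2 : aa^2 ≤ w := by
          have h2 : (aa^3)^((2:ℝ)/3) ≤ w := by
            rw [hwdef]; exact Real.rpow_le_rpow (by positivity) haI (by norm_num)
          rwa [hpow23 aa h.le] at h2
        nlinarith [sq_nonneg y, mul_nonneg (sq_nonneg y) hw0, hw0]
      · have haa2 : aa^2 ≤ 2*t^2 + 2*y^2 := by
          have heq : aa = t - y := by rw [haadef, hydef]
          rw [heq]
          nlinarith [sq_nonneg (t+y)]
        nlinarith [mul_nonneg (sq_nonneg y) hw0, ht2w]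
  have hRatio : mt ≤ (2 + 2*w) * m0 := by
    rw [hmt, hm0]
    nlinarith [mul_le_mul_of_nonneg_left claim1 hc2pos.le, mul_nonneg (sq_nonneg l) hw0]
  have hν23 : 0 < ν^((2:ℝ)/3) := Real.rpow_pos_of_pos hν0 _
  have hν23le1 : ν^((2:ℝ)/3) ≤ 1 := Real.rpow_le_one hν0.le hν1 (by norm_num)
  have hinv1 : 1 ≤ (ν^((2:ℝ)/3))⁻¹ := by
    rw [one_le_inv_iff₀]
    exact ⟨hν23, hν23le1⟩
  have hνpow : ν ^ (-(2:ℝ)/3) = (ν^((2:ℝ)/3))⁻¹ := by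
    rw [show (-(2:ℝ)/3) = -((2:ℝ)/3) by norm_num, Real.rpow_neg hν0.le]
  have hwu : w = (12*u)^((2:ℝ)/3) * (ν^((2:ℝ)/3))⁻¹ := by
    have h1 : 12*Itil = (12*u)/ν := by
      rw [hudef]; field_simp
    rw [hwdef, h1, Real.div_rpow (by positivity) hν0.le]
    rw [div_eq_mul_inv]
  have h1 : mt / m0 ≤ 2 + 2*w := by
    rw [div_le_iff₀ hm0pos]
    exact hRatio
  have h2 : Real.exp (-(ν*M)) ≤ Real.exp (-(ν*t^3)/24) * Real.exp (-(u/2)) := by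
    rw [← Real.exp_add]
    apply Real.exp_le_exp.mpr
    linarith
  have h3 : (2 + 2*w) * Real.exp (-(u/2)) ≤ 9 * ν^(-(2:ℝ)/3) := by
    have hws : 2 + 2*w ≤ (ν^((2:ℝ)/3))⁻¹ * (2 + 2*(12*u)^((2:ℝ)/3)) := by
      rw [hwu]
      calc 2 + 2*((12*u)^((2:ℝ)/3) * (ν^((2:ℝ)/3))⁻¹)
          ≤ 2*(ν^((2:ℝ)/3))⁻¹ + 2*((12*u)^((2:ℝ)/3) * (ν^((2:ℝ)/3))⁻¹) := by linarith
        _ = (ν^((2:ℝ)/3))⁻¹ * (2 + 2*(12*u)^((2:ℝ)/3)) := by ring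
    calc (2 + 2*w) * Real.exp (-(u/2))
        ≤ ((ν^((2:ℝ)/3))⁻¹ * (2 + 2*(12*u)^((2:ℝ)/3))) * Real.exp (-(u/2)) := by
          apply mul_le_mul_of_nonneg_right hws (Real.exp_pos _).le
      _ = (ν^((2:ℝ)/3))⁻¹ * ((2 + 2*(12*u)^((2:ℝ)/3)) * Real.exp (-(u/2))) := by ring
      _ ≤ (ν^((2:ℝ)/3))⁻¹ * 9 := by
          apply mul_le_mul_of_nonneg_left (aux_scalar u hu0) (by positivity)
      _ = 9 * ν^(-(2:ℝ)/3) := by rw [hνpow]; ring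
  have hmain : mt / m0 * Real.exp (-(ν*M)) ≤ 9 * ν^(-(2:ℝ)/3) * Real.exp (-(ν*t^3)/24) := by
    calc mt / m0 * Real.exp (-(ν*M))
        ≤ (2+2*w) * (Real.exp (-(ν*t^3)/24) * Real.exp (-(u/2))) := by
          apply mul_le_mul h1 h2 (Real.exp_pos _).le (by linarith)
      _ = Real.exp (-(ν*t^3)/24) * ((2+2*w) * Real.exp (-(u/2))) := by ring
      _ ≤ Real.exp (-(ν*t^3)/24) * (9 * ν^(-(2:ℝ)/3)) := by
          apply mul_le_mul_of_nonneg_left h3 (Real.exp_pos _).le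
      _ = 9 * ν^(-(2:ℝ)/3) * Real.exp (-(ν*t^3)/24) := by ring
  rw [hnorm2]
  exact mul_le_mul_of_nonneg_right hmain (norm_nonneg (g 0))
end

section
/- For every integer k, every real η, every real l and every t ∈ ℝ, the series Υ(t,k,η,l) = Σ_{k' ∈ ℤ, k' ≠ k} (1/|k − k'|)·(1 + |k − k'| + |k'|)/((1 + |k − k'| + |k'|)² + (η − (k − k')t)²) converges and satisfies Υ(t,k,η,l) ≤ 2. -/
set_option maxHeartbeats 1000000

open Finset Filter

/-- auxiliary: telescoping sum -/
lemma aux_hasSum_nat : HasSum (fun n : ℕ => 1 / ((n : ℝ) * (1 + n))) 1 := by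
  have hnn : ∀ n : ℕ, 0 ≤ 1 / ((n : ℝ) * (1 + n)) := by
    intro n; positivity
  rw [hasSum_iff_tendsto_nat_of_nonneg hnn]
  have hform : ∀ n : ℕ, ∑ i ∈ range (n + 1), 1 / ((i : ℝ) * (1 + i)) = 1 - 1 / (n + 1) := by
    intro n
    induction n with
    | zero => simp
    | succ m ih =>
      rw [Finset.sum_range_succ, ih]
      have h1 : (m : ℝ) + 1 ≠ 0 := by positivity
      push_cast
      field_simp
      ring
  rw [← tendsto_add_atTop_iff_nat 1]
  simp only [hform]
  have h : Tendsto (fun n : ℕ => 1 - 1 / ((n : ℝ) + 1)) atTop (nhds (1 - 0)) :=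
    Tendsto.sub tendsto_const_nhds tendsto_one_div_add_atTop_nhds_zero_nat
  simpa using h

lemma aux_hasSum_int : HasSum (fun n : ℤ => 1 / (|(n : ℝ)| * (1 + |(n : ℝ)|))) 2 := by
  have h1 : HasSum (fun n : ℕ => 1 / (|(((n : ℤ)) : ℝ)| * (1 + |(((n : ℤ)) : ℝ)|))) 1 :=
    aux_hasSum_nat.congr_fun fun n => by
      push_cast
      rw [abs_of_nonneg (Nat.cast_nonneg (α := ℝ) n)]
  have h2 : HasSum
      (fun n : ℕ => 1 / (|(((-(n + 1) : ℤ)) : ℝ)| * (1 + |(((-(n + 1) : ℤ)) : ℝ)|))) 1 := by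
    have key := (hasSum_nat_add_iff' (f := fun n : ℕ => 1 / ((n : ℝ) * (1 + n))) 1).mpr
      aux_hasSum_nat
    simp only [Finset.range_one, Finset.sum_singleton, Nat.cast_zero, zero_mul,
      div_zero, sub_zero] at key
    refine key.congr_fun fun n => ?_
    have hn : (0:ℝ) ≤ (n:ℝ) + 1 := by positivity
    push_cast
    rw [abs_of_nonpos (by linarith : -((n:ℝ) + 1) ≤ 0)]
    ring_nf
  have h := HasSum.of_nat_of_neg_add_one
    (f := fun n : ℤ => 1 / (|(n : ℝ)| * (1 + |(n : ℝ)|))) h1 (by exact_mod_cast h2)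
  norm_num at h
  exact h.congr_fun fun n => by rw [one_div, mul_inv, mul_comm]

theorem stmt_12 (k : ℤ) (η l t : ℝ) :
    Summable (fun k' : {k' : ℤ // k' ≠ k} =>
      (1 / |(k:ℝ) - ((k' : ℤ) : ℝ)|) *
        ((1 + |(k:ℝ) - ((k' : ℤ) : ℝ)| + |((k' : ℤ) : ℝ)|) /
          ((1 + |(k:ℝ) - ((k' : ℤ) : ℝ)| + |((k' : ℤ) : ℝ)|) ^ 2 +
            (η - ((k:ℝ) - ((k' : ℤ) : ℝ)) * t) ^ 2))) ∧
    (∑' k' : {k' : ℤ // k' ≠ k},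
      (1 / |(k:ℝ) - ((k' : ℤ) : ℝ)|) *
        ((1 + |(k:ℝ) - ((k' : ℤ) : ℝ)| + |((k' : ℤ) : ℝ)|) /
          ((1 + |(k:ℝ) - ((k' : ℤ) : ℝ)| + |((k' : ℤ) : ℝ)|) ^ 2 +
            (η - ((k:ℝ) - ((k' : ℤ) : ℝ)) * t) ^ 2))) ≤ 2 := by
  set G : ℤ → ℝ := fun k' => 1 / (|(k:ℝ) - (k' : ℝ)| * (1 + |(k:ℝ) - (k' : ℝ)|)) with hGdef
  set F : ℤ → ℝ := fun k' =>
      (1 / |(k:ℝ) - (k' : ℝ)|) *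
        ((1 + |(k:ℝ) - (k' : ℝ)| + |(k' : ℝ)|) /
          ((1 + |(k:ℝ) - (k' : ℝ)| + |(k' : ℝ)|) ^ 2 +
            (η - ((k:ℝ) - (k' : ℝ)) * t) ^ 2)) with hFdef
  -- G has sum 2 by reindexing
  have hGsum : HasSum G 2 := by
    have hcomp : G = (fun n : ℤ => 1 / (|(n : ℝ)| * (1 + |(n : ℝ)|))) ∘ (Equiv.subLeft k) := by
      funext n
      simp only [hGdef, Function.comp, Equiv.subLeft_apply]
      push_cast
      ring_nf
    rw [hcomp]
    exact (Equiv.hasSum_iff (Equiv.subLeft k)).mpr aux_hasSum_int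
  -- nonnegativity of F
  have hFnn : ∀ n : ℤ, 0 ≤ F n := by
    intro n
    apply mul_nonneg
    · positivity
    · apply div_nonneg
      · positivity
      · positivity
  -- pointwise bound F ≤ G
  have hFG : ∀ n : ℤ, F n ≤ G n := by
    intro n
    by_cases hn : (k:ℝ) - (n : ℝ) = 0
    · simp [hFdef, hGdef, hn]
    · have hd : 0 < |(k:ℝ) - (n : ℝ)| := abs_pos.mpr hn
      set d := |(k:ℝ) - (n : ℝ)|
      set A := 1 + d + |(n : ℝ)| with hA
      have hAn : 0 ≤ |(n : ℝ)| := abs_nonneg _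
      have hApos : 0 < A := by simp only [hA]; linarith
      have hstep : A / (A ^ 2 + (η - ((k:ℝ) - (n : ℝ)) * t) ^ 2) ≤ 1 / (1 + d) := by
        have h1 : A / (A ^ 2 + (η - ((k:ℝ) - (n : ℝ)) * t) ^ 2) ≤ A / A ^ 2 := by
          apply div_le_div_of_nonneg_left hApos.le (by positivity)
          nlinarith [sq_nonneg (η - ((k:ℝ) - (n : ℝ)) * t)]
        have h2 : A / A ^ 2 = 1 / A := by
          rw [sq]
          field_simp
        have h3 : (1:ℝ) / A ≤ 1 / (1 + d) := by
          apply one_div_le_one_div_of_le (by linarith)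
          simp only [hA]; linarith
        calc A / (A ^ 2 + (η - ((k:ℝ) - (n : ℝ)) * t) ^ 2) ≤ A / A ^ 2 := h1
          _ = 1 / A := h2
          _ ≤ 1 / (1 + d) := h3
      have := mul_le_mul_of_nonneg_left hstep (le_of_lt (by positivity : (0:ℝ) < 1 / d))
      calc F n = (1 / d) * (A / (A ^ 2 + (η - ((k:ℝ) - (n : ℝ)) * t) ^ 2)) := rfl
        _ ≤ (1 / d) * (1 / (1 + d)) := this
        _ = G n := by rw [hGdef]; field_simp; rfl
  -- F is summable over ℤ
  have hFsum : Summable F :=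
    Summable.of_nonneg_of_le hFnn hFG hGsum.summable
  -- tsum F ≤ 2
  have htsumF : ∑' n : ℤ, F n ≤ 2 :=
    hGsum.tsum_eq ▸ Summable.tsum_le_tsum hFG hFsum hGsum.summable
  -- restrict to the subtype
  have hsupp : Function.support F ⊆ {k' : ℤ | k' ≠ k} := by
    intro n hn
    simp only [Set.mem_setOf_eq]
    intro hkn
    apply hn
    simp [hFdef, hkn]
  constructor
  · exact hFsum.subtype _
  · have heq : (∑' k' : {k' : ℤ // k' ≠ k}, F (k' : ℤ)) = ∑' n : ℤ, F n :=
      tsum_subtype_eq_of_support_subset hsupp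
    calc (∑' k' : {k' : ℤ // k' ≠ k}, F (k' : ℤ)) = ∑' n : ℤ, F n := heq
      _ ≤ 2 := htsumF
end

section
/- For every integer k, every real η, every real l and every t ≥ 0, one has ∫₀ᵗ Υ(s,k,η,l) ds ≤ π³/3, where Υ(s,k,η,l) = Σ_{k' ∈ ℤ, k' ≠ k} (1/|k − k'|)·(1 + |k − k'| + |k'|)/((1 + |k − k'| + |k'|)² + (η − (k − k')s)²). -/
open Real MeasureTheory

private lemma deriv_aux (c a η : ℝ) (hc : c ≠ 0) (ha : 0 < a) (s : ℝ) :
    HasDerivAt (fun s : ℝ => -(1/c) * arctan ((η - c*s)/a))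
      (a / (a^2 + (η - c*s)^2)) s := by
  have h1 : HasDerivAt (fun s : ℝ => (η - c*s)/a) (-c/a) s := by
    have hcs : HasDerivAt (fun s : ℝ => c * s) c s := by
      simpa using (hasDerivAt_id s).const_mul c
    have : HasDerivAt (fun s : ℝ => η - c*s) (0 - c) s :=
      (hasDerivAt_const s η).sub hcs
    simpa using this.div_const a
  have h2 := (h1.arctan).const_mul (-(1/c))
  refine h2.congr_deriv ?_
  have hden : a^2 + (η - c*s)^2 > 0 := by positivity
  field_simp

private lemma integ_le (c a η t : ℝ) (hc : c ≠ 0) (ha : 0 < a) (ht : 0 ≤ t) :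
    ∫ s in (0:ℝ)..t, a / (a^2 + (η - c*s)^2) ≤ π / |c| := by
  have hcont : Continuous fun s : ℝ => a / (a^2 + (η - c*s)^2) := by
    apply Continuous.div continuous_const (by continuity)
    intro s; positivity
  have heq := intervalIntegral.integral_eq_sub_of_hasDerivAt
    (f := fun s : ℝ => -(1/c) * arctan ((η - c*s)/a))
    (fun s _ => deriv_aux c a η hc ha s)
    (hcont.intervalIntegrable 0 t)
  rw [heq]
  have h1a := arctan_lt_pi_div_two ((η - c*t)/a)
  have h1b := neg_pi_div_two_lt_arctan ((η - c*t)/a)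
  have h2a := arctan_lt_pi_div_two ((η - c*0)/a)
  have h2b := neg_pi_div_two_lt_arctan ((η - c*0)/a)
  have hcpos : 0 < |c| := abs_pos.mpr hc
  rw [div_eq_mul_inv π]
  have h3 : -(1/c) * arctan ((η - c*t)/a) - -(1/c) * arctan ((η - c*0)/a)
      ≤ |1/c| * |arctan ((η - c*t)/a) - arctan ((η - c*0)/a)| := by
    calc _ ≤ |-(1/c) * arctan ((η - c*t)/a) - -(1/c) * arctan ((η - c*0)/a)| := le_abs_self _
    _ = |(-(1/c)) * (arctan ((η - c*t)/a) - arctan ((η - c*0)/a))| := by ring_nf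
    _ = |(-(1/c))| * |arctan ((η - c*t)/a) - arctan ((η - c*0)/a)| := abs_mul _ _
    _ = _ := by rw [abs_neg]
  refine h3.trans ?_
  rw [abs_div, abs_one]
  have h4 : |arctan ((η - c*t)/a) - arctan ((η - c*0)/a)| ≤ π := by
    rw [abs_le]; constructor <;> nlinarith
  calc 1/|c| * |arctan ((η - c*t)/a) - arctan ((η - c*0)/a)| ≤ 1/|c| * π := by
        apply mul_le_mul_of_nonneg_left h4; positivity
    _ = π * |c|⁻¹ := by ring

private lemma hasSum_int_pi_sq : HasSum (fun m : ℤ => π / (m:ℝ)^2) (π^3/3) := by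
  have hnat : HasSum (fun n : ℕ => π / (n:ℝ)^2) (π^3/6) := by
    have h := hasSum_zeta_two.mul_left π
    have heq : (fun n : ℕ => π * ((1:ℝ)/(n:ℝ)^2)) = fun n : ℕ => π / (n:ℝ)^2 := by
      funext n; rw [mul_one_div]
    rw [heq] at h
    rw [show π^3/6 = π*(π^2/6) by ring]; exact h
  have h1 : HasSum (fun n : ℕ => π / (((n:ℤ)):ℝ)^2) (π^3/6) := by exact_mod_cast hnat
  have h2 : HasSum (fun n : ℕ => π / (((-((n:ℤ)+1)):ℤ):ℝ)^2) (π^3/6) := by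
    have hshift : HasSum (fun n : ℕ => π / (((n+1:ℕ)):ℝ)^2) (π^3/6) := by
      rw [hasSum_nat_add_iff (f := fun n : ℕ => π / (n:ℝ)^2) 1]
      simpa using hnat
    convert hshift using 2 with n
    push_cast; ring
  have h := HasSum.of_nat_of_neg_add_one (f := fun m : ℤ => π/(m:ℝ)^2) h1 h2
  convert h using 1; ring

private lemma hasSum_subtype_pi (k : ℤ) :
    HasSum (fun i : {k' : ℤ // k' ≠ k} => π / (((k : ℝ) - ((i : ℤ) : ℝ))^2)) (π^3/3) := by
  have hg : Function.Injective (fun i : {k' : ℤ // k' ≠ k} => k - (i : ℤ)) := by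
    intro a b hab
    simp only at hab
    ext; omega
  have hsupp : ∀ m ∉ Set.range (fun i : {k' : ℤ // k' ≠ k} => k - (i : ℤ)),
      π / (m:ℝ)^2 = 0 := by
    intro m hm
    by_cases hm0 : m = 0
    · rw [hm0]; norm_num
    · exact absurd ⟨⟨k - m, by omega⟩, by simp⟩ hm
  have h := (hg.hasSum_iff hsupp).mpr hasSum_int_pi_sq
  convert h using 2 with i
  simp only [Function.comp]
  push_cast
  ring

theorem stmt_13 (k : ℤ) (η l t : ℝ) (ht : 0 ≤ t) :
    (∫ s in (0:ℝ)..t,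
      ∑' k' : {k' : ℤ // k' ≠ k},
        (1 / |(k:ℝ) - ((k' : ℤ) : ℝ)|) *
          ((1 + |(k:ℝ) - ((k' : ℤ) : ℝ)| + |((k' : ℤ) : ℝ)|) /
            ((1 + |(k:ℝ) - ((k' : ℤ) : ℝ)| + |((k' : ℤ) : ℝ)|) ^ 2 +
              (η - ((k:ℝ) - ((k' : ℤ) : ℝ)) * s) ^ 2)))
      ≤ π ^ 3 / 3 := by
  set F : {k' : ℤ // k' ≠ k} → ℝ → ℝ := fun i s =>
    (1 / |(k:ℝ) - ((i : ℤ) : ℝ)|) *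
      ((1 + |(k:ℝ) - ((i : ℤ) : ℝ)| + |((i : ℤ) : ℝ)|) /
        ((1 + |(k:ℝ) - ((i : ℤ) : ℝ)| + |((i : ℤ) : ℝ)|) ^ 2 +
          (η - ((k:ℝ) - ((i : ℤ) : ℝ)) * s) ^ 2)) with hF
  have hc : ∀ i : {k' : ℤ // k' ≠ k}, (k:ℝ) - ((i : ℤ) : ℝ) ≠ 0 := by
    intro i
    have : (i : ℤ) ≠ k := i.2
    intro h
    apply this
    have h2 : ((i : ℤ) : ℝ) = (k : ℝ) := by linarith
    exact_mod_cast h2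
  have ha : ∀ i : {k' : ℤ // k' ≠ k},
      (0:ℝ) < 1 + |(k:ℝ) - ((i : ℤ) : ℝ)| + |((i : ℤ) : ℝ)| := by
    intro i; positivity
  have hcont : ∀ i, Continuous (F i) := by
    intro i
    apply Continuous.mul continuous_const
    apply Continuous.div continuous_const (by continuity)
    intro s
    have := ha i
    positivity
  have hnn : ∀ i, ∀ s : ℝ, 0 ≤ F i s := by
    intro i s
    have := ha i
    have h2 : (0:ℝ) < (1 + |(k:ℝ) - ((i : ℤ) : ℝ)| + |((i : ℤ) : ℝ)|) ^ 2 +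
        (η - ((k:ℝ) - ((i : ℤ) : ℝ)) * s) ^ 2 := by positivity
    positivity
  have hbound : ∀ i, ∫ s in Set.Ioc (0:ℝ) t, F i s ≤ π / ((k:ℝ) - ((i : ℤ) : ℝ))^2 := by
    intro i
    set c := (k:ℝ) - ((i : ℤ) : ℝ)
    set a := 1 + |c| + |((i : ℤ) : ℝ)|
    have hc' := hc i
    have ha' := ha i
    rw [← intervalIntegral.integral_of_le ht]
    have h1 : (∫ s in (0:ℝ)..t, F i s) = (1/|c|) * ∫ s in (0:ℝ)..t, a / (a^2 + (η - c*s)^2) := by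
      rw [← intervalIntegral.integral_const_mul]
    rw [h1]
    have h2 := integ_le c a η t hc' ha' ht
    have h3 : (1:ℝ)/|c| * (π/|c|) = π / c^2 := by
      rw [div_mul_div_comm, one_mul, ← abs_mul, ← sq, abs_of_nonneg (sq_nonneg c)]
    calc (1/|c|) * ∫ s in (0:ℝ)..t, a / (a^2 + (η - c*s)^2) ≤ (1/|c|) * (π/|c|) := by
          apply mul_le_mul_of_nonneg_left h2; positivity
      _ = π / c^2 := h3
  have hint : ∀ i, IntegrableOn (F i) (Set.Ioc (0:ℝ) t) := fun i =>
    (hcont i).integrableOn_Ioc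
  have hSumm : Summable (fun i : {k' : ℤ // k' ≠ k} => π / ((k:ℝ) - ((i : ℤ) : ℝ))^2) :=
    (hasSum_subtype_pi k).summable
  have hnnInt : ∀ i, 0 ≤ ∫ s in Set.Ioc (0:ℝ) t, F i s := fun i =>
    setIntegral_nonneg measurableSet_Ioc (fun s _ => hnn i s)
  have hnnBound : ∀ i : {k' : ℤ // k' ≠ k}, 0 ≤ π / ((k:ℝ) - ((i : ℤ) : ℝ))^2 := by
    intro i
    have := hc i
    positivity
  have hlin : ∀ i, (∫⁻ s in Set.Ioc (0:ℝ) t, ‖F i s‖₊) =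
      ENNReal.ofReal (∫ s in Set.Ioc (0:ℝ) t, F i s) := by
    intro i
    rw [ofReal_integral_eq_lintegral_ofReal (hint i)
      (Filter.Eventually.of_forall (fun s => hnn i s))]
    congr 1
    funext s
    rw [← Real.enorm_eq_ofReal (hnn i s), enorm_eq_nnnorm]
  have hne : (∑' i : {k' : ℤ // k' ≠ k}, ∫⁻ s in Set.Ioc (0:ℝ) t, ‖F i s‖₊) ≠ ⊤ := by
    have hle : (∑' i : {k' : ℤ // k' ≠ k}, ∫⁻ s in Set.Ioc (0:ℝ) t, ‖F i s‖₊)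
        ≤ ∑' i : {k' : ℤ // k' ≠ k}, ENNReal.ofReal (π / ((k:ℝ) - ((i : ℤ) : ℝ))^2) := by
      apply ENNReal.tsum_le_tsum
      intro i
      rw [hlin i]
      exact ENNReal.ofReal_le_ofReal (hbound i)
    have heq : (∑' i : {k' : ℤ // k' ≠ k}, ENNReal.ofReal (π / ((k:ℝ) - ((i : ℤ) : ℝ))^2))
        = ENNReal.ofReal (∑' i : {k' : ℤ // k' ≠ k}, π / ((k:ℝ) - ((i : ℤ) : ℝ))^2) :=
      (ENNReal.ofReal_tsum_of_nonneg hnnBound hSumm).symm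
    rw [heq] at hle
    exact ne_top_of_le_ne_top ENNReal.ofReal_ne_top hle
  rw [intervalIntegral.integral_of_le ht]
  have hswap : (∫ s in Set.Ioc (0:ℝ) t, ∑' i : {k' : ℤ // k' ≠ k}, F i s)
      = ∑' i : {k' : ℤ // k' ≠ k}, ∫ s in Set.Ioc (0:ℝ) t, F i s :=
    integral_tsum (fun i => (hcont i).aestronglyMeasurable) hne
  rw [show (∫ s in Set.Ioc (0:ℝ) t,
      ∑' k' : {k' : ℤ // k' ≠ k},
        (1 / |(k:ℝ) - ((k' : ℤ) : ℝ)|) *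
          ((1 + |(k:ℝ) - ((k' : ℤ) : ℝ)| + |((k' : ℤ) : ℝ)|) /
            ((1 + |(k:ℝ) - ((k' : ℤ) : ℝ)| + |((k' : ℤ) : ℝ)|) ^ 2 +
              (η - ((k:ℝ) - ((k' : ℤ) : ℝ)) * s) ^ 2)))
      = ∫ s in Set.Ioc (0:ℝ) t, ∑' i : {k' : ℤ // k' ≠ k}, F i s from rfl]
  rw [hswap]
  have hSummL : Summable (fun i : {k' : ℤ // k' ≠ k} => ∫ s in Set.Ioc (0:ℝ) t, F i s) :=
    Summable.of_nonneg_of_le hnnInt hbound hSumm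
  calc (∑' i : {k' : ℤ // k' ≠ k}, ∫ s in Set.Ioc (0:ℝ) t, F i s)
      ≤ ∑' i : {k' : ℤ // k' ≠ k}, π / ((k:ℝ) - ((i : ℤ) : ℝ))^2 :=
        Summable.tsum_le_tsum hbound hSummL hSumm
    _ = π^3/3 := (hasSum_subtype_pi k).tsum_eq
end

section
/- For every ν > 0, every real k with |k| ≥ 1, every real η and every t ≥ 0, one has exp(ν^{1/3}t/3 − ν·∫₀ᵗ (η − ks)² ds) ≤ e. -/
open Real

theorem stmt_18 (ν : ℝ) (hν : 0 < ν) (k : ℝ) (hk : 1 ≤ |k|) (η t : ℝ) (ht : 0 ≤ t) :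
    Real.exp (ν ^ ((1:ℝ)/3) * t / 3 - ν * ∫ s in (0:ℝ)..t, (η - k * s) ^ 2)
      ≤ Real.exp 1 := by
  have hint : (∫ s in (0:ℝ)..t, (η - k * s) ^ 2)
      = η ^ 2 * t - η * k * t ^ 2 + k ^ 2 * t ^ 3 / 3 := by
    have h := intervalIntegral.integral_eq_sub_of_hasDerivAt
      (f := fun s => η ^ 2 * s - η * k * s ^ 2 + k ^ 2 * s ^ 3 / 3)
      (f' := fun s => (η - k * s) ^ 2) (a := (0:ℝ)) (b := t)
      (fun s _ => by
        have : HasDerivAt (fun s : ℝ => η ^ 2 * s - η * k * s ^ 2 + k ^ 2 * s ^ 3 / 3)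
            (η ^ 2 - η * k * (2 * s) + k ^ 2 * (3 * s ^ 2) / 3) s := by
          apply HasDerivAt.add
          apply HasDerivAt.sub
          · simpa using (hasDerivAt_id s).const_mul (η ^ 2)
          · simpa using ((hasDerivAt_pow 2 s).const_mul (η * k))
          · simpa using ((hasDerivAt_pow 3 s).const_mul (k ^ 2)).div_const 3
        exact this.congr_deriv (by ring))
      (by
        apply Continuous.intervalIntegrable
        continuity)
    simpa using h
  have hk2 : 1 ≤ k ^ 2 := by
    have := sq_abs k
    nlinarith [sq_nonneg (|k| - 1)]
  have hlow : t ^ 3 / 12 ≤ ∫ s in (0:ℝ)..t, (η - k * s) ^ 2 := by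
    rw [hint]
    nlinarith [mul_nonneg ht (sq_nonneg (η - k * t / 2)), sq_nonneg t, pow_nonneg ht 3]
  have ha : 0 < ν ^ ((1:ℝ)/3) := Real.rpow_pos_of_pos hν _
  have hacube : (ν ^ ((1:ℝ)/3)) ^ 3 = ν := by
    rw [← Real.rpow_natCast (ν ^ ((1:ℝ)/3)) 3, ← Real.rpow_mul hν.le]
    norm_num
  apply Real.exp_le_exp.mpr
  have h1 : ν * (t ^ 3 / 12) ≤ ν * ∫ s in (0:ℝ)..t, (η - k * s) ^ 2 :=
    mul_le_mul_of_nonneg_left hlow hν.le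
  have h2 : ν ^ ((1:ℝ)/3) * t / 3 - ν * (t ^ 3 / 12) ≤ 1 := by
    set a := ν ^ ((1:ℝ)/3)
    have hu : 0 ≤ a * t := mul_nonneg ha.le ht
    have : ν * t ^ 3 = (a * t) ^ 3 := by rw [mul_pow, hacube]
    nlinarith [mul_nonneg hu (sq_nonneg (a * t - 2)), sq_nonneg (a * t - 1)]
  linarith
end
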